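/- Let s, t, r be three distinct reflections in GL_n(ℚ) such that the subgroups ⟨s, t⟩ and ⟨t, r⟩ are finite, ⟨s, t⟩ ∩ ⟨t, r⟩ = ⟨t⟩, and the subgroup R = ⟨s, t, r⟩ contains reflections with infinitely many distinct reflecting hyperplanes. Then ℚ[x_1,…,x_n] = ℚ[x_1,…,x_n]^s + ℚ[x_1,…,x_n]^t + ℚ[x_1,…,x_n]^r as ℚ-vector spaces; that is, in each homogeneous degree every polynomial is a ℚ-linear combination of s-invariant, t-invariant, and r-invariant polynomials. -/

import Mathlib

/-!
Suppose the sum `S` of the three invariant subspaces were proper, and pick a linear functional `φ`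
on `ℚ[x₁, …, xₙ]` that kills `S` but not everything. For each generator `g ∈ {s, t, r}` the
polynomial `f + g • f` is `g`-invariant, so `φ (g • f) = -φ f = det g • φ f`; hence
`φ (w • f) = det w • φ f` for every `w ∈ R = ⟨s, t, r⟩`. If `w ∈ R` is a reflection and `v` lies
on its hyperplane, the linear form `ℓ_v = ∑ vᵢ xᵢ` is fixed by `w`, so `φ (ℓ_v ^ d) = 0`.
By the multinomial theorem `v ↦ φ (ℓ_v ^ d)` is a polynomial function of `v`, nonzero for a
suitable `d`, and it vanishes on infinitely many hyperplanes. This is impossible: every hyperplane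
on which a nonzero polynomial vanishes is the zero set of one of its finitely many irreducible
factors.
-/

open Matrix MvPolynomial

/-- The action of an `n × n` rational matrix on `ℚ[x_1, …, x_n]` by linear substitution
of the variables: `x_i ↦ ∑ j, g j i • x_j`. -/
noncomputable def matAct {n : ℕ} (g : Matrix (Fin n) (Fin n) ℚ) :
    MvPolynomial (Fin n) ℚ →ₐ[ℚ] MvPolynomial (Fin n) ℚ :=
  MvPolynomial.aeval fun i => ∑ j, MvPolynomial.C (g j i) * MvPolynomial.X j

/-- The fixed subspace of `g ∈ GL_n(ℚ)` acting on `ℚ^n`; for a reflection this is its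
reflecting hyperplane. -/
noncomputable def fixedSpace {n : ℕ} (g : GL (Fin n) ℚ) : Submodule ℚ (Fin n → ℚ) :=
  LinearMap.ker (Matrix.toLin' (g : Matrix (Fin n) (Fin n) ℚ) - LinearMap.id)

/-- A reflection is an involution in `GL_n(ℚ)` whose fixed subspace has dimension `n - 1`. -/
def IsReflection {n : ℕ} (r : GL (Fin n) ℚ) : Prop :=
  r * r = 1 ∧ Module.finrank ℚ (fixedSpace r) = n - 1

/-- The subspace `ℚ[x_1, …, x_n]^H` of polynomials invariant under a subgroup
`H ≤ GL_n(ℚ)`. -/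
noncomputable def polyInvariants {n : ℕ} (H : Subgroup (GL (Fin n) ℚ)) :
    Submodule ℚ (MvPolynomial (Fin n) ℚ) where
  carrier := {f | ∀ g ∈ H, matAct ((g : GL (Fin n) ℚ) : Matrix (Fin n) (Fin n) ℚ) f = f}
  add_mem' := by
    intro a b ha hb g hg
    rw [map_add, ha g hg, hb g hg]
  zero_mem' := by
    intro g hg
    rw [map_zero]
  smul_mem' := by
    intro c f hf g hg
    rw [_root_.map_smul, hf g hg]

/-- The relative invariants `ℚ[x_1, …, x_n]^H_det` (with respect to the determinant) of a
subgroup `H ≤ GL_n(ℚ)`: the polynomials `f` with `g • f = det g • f` for all `g ∈ H`. -/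
noncomputable def polyRelInvariants {n : ℕ} (H : Subgroup (GL (Fin n) ℚ)) :
    Submodule ℚ (MvPolynomial (Fin n) ℚ) where
  carrier := {f | ∀ g ∈ H,
    matAct ((g : GL (Fin n) ℚ) : Matrix (Fin n) (Fin n) ℚ) f
      = ((g : GL (Fin n) ℚ) : Matrix (Fin n) (Fin n) ℚ).det • f}
  add_mem' := by
    intro a b ha hb g hg
    rw [map_add, ha g hg, hb g hg, smul_add]
  zero_mem' := by
    intro g hg
    rw [map_zero, smul_zero]
  smul_mem' := by
    intro c f hf g hg
    rw [_root_.map_smul, hf g hg, smul_comm]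

/-- The subspace `ℚ[x_1, …, x_n]^g` of polynomials fixed by a single element
`g ∈ GL_n(ℚ)`. -/
noncomputable def polyInvariantsElem {n : ℕ} (g : GL (Fin n) ℚ) :
    Submodule ℚ (MvPolynomial (Fin n) ℚ) where
  carrier := {f | matAct ((g : GL (Fin n) ℚ) : Matrix (Fin n) (Fin n) ℚ) f = f}
  add_mem' := by
    intro a b ha hb
    rw [Set.mem_setOf_eq, map_add, ha, hb]
  zero_mem' := by
    rw [Set.mem_setOf_eq, map_zero]
  smul_mem' := by
    intro c f hf
    rw [Set.mem_setOf_eq, _root_.map_smul, hf]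

open Module

namespace MvPolynomial

noncomputable def linearForm {σ R : Type*} [CommSemiring R] [Fintype σ] (c : σ → R) :
    MvPolynomial σ R :=
  ∑ i, c i • X i

theorem aeval_sub_aeval_mem {σ R A : Type*} [CommRing R] [CommRing A] [Algebra R A]
    {I : Ideal A} {x y : σ → A} (hxy : ∀ i, x i - y i ∈ I) (p : MvPolynomial σ R) :
    aeval x p - aeval y p ∈ I := by
  rw [← Ideal.Quotient.eq, ← Ideal.Quotient.mkₐ_eq_mk R, comp_aeval_apply, comp_aeval_apply]
  congr 2 with i
  exact Ideal.Quotient.eq.2 (hxy i)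

theorem eval_eq_zero_iff_of_associated {σ R : Type*} [CommRing R] [IsDomain R]
    {p q : MvPolynomial σ R} (h : Associated p q) (v : σ → R) :
    eval v p = 0 ↔ eval v q = 0 := by
  obtain ⟨u, rfl⟩ := h
  simp [(u.isUnit.map (eval v)).ne_zero]

section Field

variable {σ K : Type*} [Field K] [Fintype σ]

@[simp]
theorem eval_linearForm (c v : σ → K) : eval v (linearForm c) = c ⬝ᵥ v := by
  simp [linearForm, dotProduct]

theorem linearForm_dvd_of_eval_eq_zero [Infinite K] {c : σ → K} (hc : c ≠ 0)
    {F : MvPolynomial σ K} (hF : ∀ v, c ⬝ᵥ v = 0 → eval v F = 0) : linearForm c ∣ F := by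
  classical
  obtain ⟨u, hu⟩ : ∃ u, c ⬝ᵥ u = 1 := by
    obtain ⟨i, hi⟩ := Function.ne_iff.1 hc
    exact ⟨Pi.single i (c i)⁻¹, by simpa using mul_inv_cancel₀ hi⟩
  -- `aeval proj` is composition with the projection `v ↦ v - (c ⬝ᵥ v) • u` onto the hyperplane,
  -- so it kills `F`, while `F - aeval proj F` is a multiple of `linearForm c`.
  set proj : σ → MvPolynomial σ K := fun j => X j - u j • linearForm c
  have hproj : aeval proj F = 0 := MvPolynomial.funext fun v => by
    rw [show eval v (aeval proj F) = aeval v (aeval proj F) from rfl, comp_aeval_apply, map_zero]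
    refine hF _ ?_
    have hv : (fun j => aeval v (proj j)) = v - (c ⬝ᵥ v) • u := by ext; simp [proj, mul_comm]
    rw [hv, dotProduct_sub, dotProduct_smul, hu, smul_eq_mul, mul_one, sub_self]
  have := aeval_sub_aeval_mem (I := Ideal.span {linearForm c}) (x := X) (y := proj) (fun j => by
    simpa [proj] using Submodule.smul_of_tower_mem _ (u j) (Ideal.mem_span_singleton_self _)) F
  rwa [aeval_X_left_apply, hproj, sub_zero, Ideal.mem_span_singleton] at this

theorem irreducible_linearForm {c : σ → K} (hc : c ≠ 0) : Irreducible (linearForm c) := by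
  classical
  obtain ⟨i, hi⟩ := Function.ne_iff.1 hc
  have hcoeff : coeff (Finsupp.single i 1) (linearForm c) = c i := by
    simp [linearForm, coeff_sum, coeff_X, Finsupp.single_left_inj]
  refine irreducible_of_totalDegree_eq_one (le_antisymm ?_ ?_) fun x hx => ?_
  · refine (totalDegree_finsetSum _ _).trans (Finset.sup_le fun j _ => ?_)
    exact (totalDegree_smul_le _ _).trans (totalDegree_X j).le
  · simpa using le_totalDegree (s := Finsupp.single i 1) (by simpa [hcoeff] using hi)
  · exact isUnit_iff_ne_zero.2 (ne_zero_of_dvd_ne_zero hi (hcoeff ▸ hx _))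

theorem finite_hyperplanes_of_eval_eq_zero [Infinite K] {F : MvPolynomial σ K} (hF : F ≠ 0) :
    {H : Submodule K (σ → K) |
      ∃ c ≠ 0, (H : Set (σ → K)) = {v | c ⬝ᵥ v = 0} ∧ ∀ v ∈ H, eval v F = 0}.Finite := by
  let zeroSet (q : MvPolynomial σ K) : Set (σ → K) := {v | eval v q = 0}
  refine (((UniqueFactorizationMonoid.factors F).finite_toSet.image zeroSet).preimage
    SetLike.coe_injective.injOn).subset ?_
  rintro H ⟨c, hc, hH, hFH⟩
  have hdvd := linearForm_dvd_of_eval_eq_zero hc fun v hv =>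
    hFH v (by rw [← SetLike.mem_coe, hH]; exact hv)
  obtain ⟨q, hq, hcq⟩ :=
    UniqueFactorizationMonoid.exists_mem_factors_of_dvd hF (irreducible_linearForm hc) hdvd
  refine ⟨q, hq, ?_⟩
  ext v
  simp [zeroSet, hH, ← eval_eq_zero_iff_of_associated hcq]

variable [DecidableEq σ]

/-- The polynomial function `v ↦ φ ((∑ i, v i • X i) ^ d)`, expanded by the multinomial
theorem. -/
noncomputable def polyOfDual (φ : Dual K (MvPolynomial σ K)) (d : ℕ) : MvPolynomial σ K :=
  ∑ s ∈ Finset.univ.finsuppAntidiag d, monomial s (s.multinomial * φ (monomial s 1))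

theorem eval_polyOfDual (φ : Dual K (MvPolynomial σ K)) (d : ℕ) (v : σ → K) :
    eval v (polyOfDual φ d) = φ (linearForm v ^ d) := by
  have hsupp : (linearForm v ^ d).support ⊆ Finset.univ.finsuppAntidiag d := fun s hs => by
    rw [mem_support_iff, linearForm, coeff_linearCombination_X_pow_of_fintype] at hs
    refine Finset.mem_finsuppAntidiag.2 ⟨?_, Finset.subset_univ _⟩
    by_contra h
    simp [Finsupp.sum_fintype, h] at hs
  conv_rhs => rw [as_sum (linearForm v ^ d), Finset.sum_subset hsupp fun s _ hs => by
    rw [notMem_support_iff.1 hs, map_zero]]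
  simp only [polyOfDual, map_sum, eval_monomial, linearForm,
    coeff_linearCombination_X_pow_of_fintype]
  refine Finset.sum_congr rfl fun s hs => ?_
  have hmon (a : K) : φ (monomial s a) = a * φ (monomial s 1) := by
    rw [← smul_eq_mul, ← map_smul, smul_monomial, smul_eq_mul, mul_one]
  rw [Finset.mem_finsuppAntidiag] at hs
  rw [if_pos (by simpa [Finsupp.sum_fintype] using hs.1), hmon (s.multinomial * _)]
  ring

theorem coeff_polyOfDual (φ : Dual K (MvPolynomial σ K)) (s : σ →₀ ℕ) :
    coeff s (polyOfDual φ s.degree) = s.multinomial * φ (monomial s 1) := by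
  rw [polyOfDual, coeff_sum, Finset.sum_eq_single s (fun t _ hts => by simp [coeff_monomial, hts])
    (fun hs => (hs (by simp [Finset.mem_finsuppAntidiag, Finsupp.degree_eq_sum])).elim),
    coeff_monomial, if_pos rfl]

theorem polyOfDual_ne_zero [CharZero K] {φ : Dual K (MvPolynomial σ K)} {s : σ →₀ ℕ}
    (hs : φ (monomial s 1) ≠ 0) : polyOfDual φ s.degree ≠ 0 := fun h => by
  have := coeff_polyOfDual φ s
  rw [h, coeff_zero, eq_comm, mul_eq_zero, Nat.cast_eq_zero, Finsupp.multinomial_eq] at this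
  exact this.elim (Nat.multinomial_pos _ _).ne' hs

end Field

end MvPolynomial

theorem LinearMap.exists_eq_transvection_of_involutive {K V : Type*} [Field K] [AddCommGroup V]
    [Module K V] [FiniteDimensional K V] {e : V →ₗ[K] V} (he : Function.Involutive e)
    (hrank : finrank K (range (e - id)) = 1) :
    ∃ (f : Dual K V) (u : V), e = transvection f u ∧ f u = -2 := by
  obtain ⟨f, u, hfu⟩ : LinearEquiv.ofInvolutive e he ∈ LinearEquiv.dilatransvections K V :=
    LinearEquiv.mem_dilatransvections_iff_finrank.2 hrank.le
  replace hfu : e = transvection f u := hfu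
  obtain ⟨x, hx⟩ : ∃ x, f x • u ≠ 0 := by
    by_contra! h
    have : range (e - id) = ⊥ := by
      ext y; simp [hfu, transvection.apply, h, eq_comm]
    rw [this, finrank_bot] at hrank
    exact zero_ne_one hrank
  refine ⟨f, u, hfu, ?_⟩
  -- `e (e x) = x + (2 + f u) • f x • u`
  have := he x
  rw [hfu, transvection.apply, transvection.apply, map_add, map_smul, smul_eq_mul, add_smul,
    mul_smul, ← add_assoc, add_assoc x, ← two_smul K, add_assoc, add_eq_left,
    smul_comm (f x) (f u), ← add_smul] at this
  exact eq_neg_of_add_eq_zero_right ((smul_eq_zero.1 this).resolve_right hx)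

section Reflections

variable {n : ℕ}

theorem matAct_X (g : Matrix (Fin n) (Fin n) ℚ) (i : Fin n) :
    matAct g (X i) = ∑ j, C (g j i) * X j :=
  aeval_X _ _

theorem matAct_C (g : Matrix (Fin n) (Fin n) ℚ) (a : ℚ) : matAct g (C a) = C a :=
  (matAct g).commutes a

theorem matAct_mul (g h : Matrix (Fin n) (Fin n) ℚ) :
    matAct (g * h) = (matAct g).comp (matAct h) := by
  refine algHom_ext fun i => ?_
  simp only [matAct_X, matAct_C, AlgHom.comp_apply, map_sum, map_mul, Matrix.mul_apply,
    Finset.sum_mul, Finset.mul_sum]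
  rw [Finset.sum_comm]
  refine Finset.sum_congr rfl fun k _ => Finset.sum_congr rfl fun j _ => ?_
  ring

theorem matAct_one : matAct (1 : Matrix (Fin n) (Fin n) ℚ) = AlgHom.id ℚ _ :=
  algHom_ext fun i => by simp [matAct_X, Matrix.one_apply]

theorem matAct_linearForm (g : Matrix (Fin n) (Fin n) ℚ) (v : Fin n → ℚ) :
    matAct g (linearForm v) = linearForm (g *ᵥ v) := by
  simp only [linearForm, map_sum, map_smul, matAct_X, Finset.smul_sum, Matrix.mulVec, dotProduct,
    Finset.sum_smul]
  rw [Finset.sum_comm]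
  refine Finset.sum_congr rfl fun j _ => Finset.sum_congr rfl fun i _ => ?_
  rw [smul_eq_C_mul, smul_eq_C_mul, map_mul]
  ring

theorem IsReflection.exists_eq_transvection {g : GL (Fin n) ℚ} (hg : IsReflection g)
    (hn : n ≠ 0) : ∃ (f : Dual ℚ (Fin n → ℚ)) (u : Fin n → ℚ),
      Matrix.toLin' (g : Matrix (Fin n) (Fin n) ℚ) = LinearMap.transvection f u ∧ f u = -2 := by
  refine LinearMap.exists_eq_transvection_of_involutive (fun x => ?_) ?_
  · rw [← Matrix.toLin'_mul_apply, ← Units.val_mul, hg.1, Units.val_one, Matrix.toLin'_one,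
      LinearMap.id_apply]
  · have := LinearMap.finrank_range_add_finrank_ker
      (Matrix.toLin' (g : Matrix (Fin n) (Fin n) ℚ) - LinearMap.id)
    rw [← fixedSpace, hg.2, finrank_fin_fun] at this
    omega

theorem IsReflection.det_eq_neg_one {g : GL (Fin n) ℚ} (hg : IsReflection g) (hn : n ≠ 0) :
    (g : Matrix (Fin n) (Fin n) ℚ).det = -1 := by
  obtain ⟨f, u, hg, hfu⟩ := hg.exists_eq_transvection hn
  rw [← LinearMap.det_toLin', hg, LinearMap.transvection.det, hfu]
  norm_num

theorem IsReflection.exists_coe_fixedSpace_eq {g : GL (Fin n) ℚ} (hg : IsReflection g)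
    (hn : n ≠ 0) : ∃ c ≠ 0, (fixedSpace g : Set (Fin n → ℚ)) = {v | c ⬝ᵥ v = 0} := by
  obtain ⟨f, u, hg, hfu⟩ := hg.exists_eq_transvection hn
  have hf (v : Fin n → ℚ) : (fun i => f (Pi.single i 1)) ⬝ᵥ v = f v := by
    conv_rhs => rw [← Finset.univ_sum_single v]
    simp only [map_sum, dotProduct]
    refine Finset.sum_congr rfl fun i _ => ?_
    rw [mul_comm, ← smul_eq_mul, ← map_smul, ← Pi.single_smul, smul_eq_mul, mul_one]
  refine ⟨fun i => f (Pi.single i 1), fun h => ?_, ?_⟩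
  · rw [← hf, h, zero_dotProduct] at hfu
    norm_num at hfu
  · have hu : u ≠ 0 := by rintro rfl; norm_num [map_zero] at hfu
    ext v
    simp [fixedSpace, hg, LinearMap.transvection.apply, hf, hu]

def detTwistedStabilizer (φ : Dual ℚ (MvPolynomial (Fin n) ℚ)) : Subgroup (GL (Fin n) ℚ) where
  carrier := {g | ∀ p, φ (matAct (g : Matrix (Fin n) (Fin n) ℚ) p)
    = (g : Matrix (Fin n) (Fin n) ℚ).det * φ p}
  mul_mem' {g h} hg hh p := by
    rw [Units.val_mul, matAct_mul, AlgHom.comp_apply, hg, hh, Matrix.det_mul, mul_assoc]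
  one_mem' p := by
    rw [Units.val_one, matAct_one, Matrix.det_one, one_mul, AlgHom.id_apply]
  inv_mem' {g} hg p := by
    have h := hg (matAct ((g⁻¹ : GL (Fin n) ℚ) : Matrix (Fin n) (Fin n) ℚ) p)
    rw [← AlgHom.comp_apply, ← matAct_mul, ← Units.val_mul, mul_inv_cancel, Units.val_one,
      matAct_one, AlgHom.id_apply] at h
    rw [h, ← mul_assoc, ← Matrix.det_mul, ← Units.val_mul, inv_mul_cancel, Units.val_one,
      Matrix.det_one, one_mul]

theorem IsReflection.mem_detTwistedStabilizer {g : GL (Fin n) ℚ} (hg : IsReflection g)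
    (hn : n ≠ 0) {φ : Dual ℚ (MvPolynomial (Fin n) ℚ)}
    (hφ : ∀ p ∈ polyInvariantsElem g, φ p = 0) : g ∈ detTwistedStabilizer φ := fun p => by
  have hsym : p + matAct (g : Matrix (Fin n) (Fin n) ℚ) p ∈ polyInvariantsElem g := by
    change matAct _ _ = _
    rw [map_add, ← AlgHom.comp_apply, ← matAct_mul, ← Units.val_mul, hg.1, Units.val_one,
      matAct_one, AlgHom.id_apply, add_comm]
  have := hφ _ hsym
  rw [map_add] at this
  rw [hg.det_eq_neg_one hn]
  linarith

theorem IsReflection.eval_polyOfDual_eq_zero {g : GL (Fin n) ℚ} (hg : IsReflection g)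
    (hn : n ≠ 0) {φ : Dual ℚ (MvPolynomial (Fin n) ℚ)} (hgφ : g ∈ detTwistedStabilizer φ)
    {v : Fin n → ℚ} (hv : v ∈ fixedSpace g) (d : ℕ) : eval v (polyOfDual φ d) = 0 := by
  have hgv : (g : Matrix (Fin n) (Fin n) ℚ) *ᵥ v = v := by
    simpa [fixedSpace, sub_eq_zero] using hv
  have := hgφ (linearForm v ^ d)
  rw [map_pow, matAct_linearForm, hgv, hg.det_eq_neg_one hn] at this
  rw [eval_polyOfDual]
  linarith

end Reflections

theorem sup_invariantsElem_eq_top_general {n : ℕ} (s t r : GL (Fin n) ℚ)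
    (hs : IsReflection s) (ht : IsReflection t) (hr : IsReflection r)
    (hinf : {H : Submodule ℚ (Fin n → ℚ) |
      ∃ g ∈ Subgroup.closure {s, t, r}, IsReflection g ∧ fixedSpace g = H}.Infinite) :
    polyInvariantsElem s ⊔ polyInvariantsElem t ⊔ polyInvariantsElem r = ⊤ := by
  have hn : n ≠ 0 := by rintro rfl; exact hinf (Set.toFinite _)
  rw [Submodule.eq_top_iff']
  by_contra! ⟨f₀, hf₀⟩
  obtain ⟨φ, hφf₀, hφS⟩ := Submodule.exists_dual_map_eq_bot_of_notMem hf₀ inferInstance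
  have hφ (g : GL (Fin n) ℚ) (hg : polyInvariantsElem g ≤
      polyInvariantsElem s ⊔ polyInvariantsElem t ⊔ polyInvariantsElem r) :
      ∀ p ∈ polyInvariantsElem g, φ p = 0 :=
    fun p hp => LinearMap.le_ker_iff_map.2 hφS (hg hp)
  have hR : Subgroup.closure {s, t, r} ≤ detTwistedStabilizer φ := by
    rw [Subgroup.closure_le]
    rintro g (rfl | rfl | rfl)
    · exact hs.mem_detTwistedStabilizer hn (hφ _ (le_sup_left.trans le_sup_left))
    · exact ht.mem_detTwistedStabilizer hn (hφ _ (le_sup_right.trans le_sup_left))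
    · exact hr.mem_detTwistedStabilizer hn (hφ _ le_sup_right)
  obtain ⟨m, hm⟩ : ∃ m, φ (monomial m 1) ≠ 0 := by
    by_contra! h
    have : φ = 0 := (basisMonomials (Fin n) ℚ).ext fun m => by simpa using h m
    exact hφf₀ (by simp [this])
  refine hinf ((finite_hyperplanes_of_eval_eq_zero (polyOfDual_ne_zero hm)).subset ?_)
  rintro _ ⟨g, hgR, hg, rfl⟩
  obtain ⟨c, hc, hgc⟩ := hg.exists_coe_fixedSpace_eq hn
  exact ⟨c, hc, hgc, fun v hv => hg.eval_polyOfDual_eq_zero hn (hR hgR) hv _⟩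

/-- Let `s, t, r` be three distinct reflections in `GL_n(ℚ)` such that
`⟨s, t⟩` and `⟨t, r⟩` are finite, `⟨s, t⟩ ∩ ⟨t, r⟩ = ⟨t⟩`, and `⟨s, t, r⟩` contains
reflections with infinitely many distinct reflecting hyperplanes.  Then
`ℚ[x_1, …, x_n] = ℚ[x_1, …, x_n]^s + ℚ[x_1, …, x_n]^t + ℚ[x_1, …, x_n]^r`. -/
theorem sup_invariantsElem_eq_top {n : ℕ} (s t r : GL (Fin n) ℚ)
    (hs : IsReflection s) (ht : IsReflection t) (hr : IsReflection r)
    (hst : s ≠ t) (htr : t ≠ r) (hsr : s ≠ r)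
    (hfinst : ((Subgroup.closure {s, t} : Subgroup (GL (Fin n) ℚ)) : Set (GL (Fin n) ℚ)).Finite)
    (hfintr : ((Subgroup.closure {t, r} : Subgroup (GL (Fin n) ℚ)) : Set (GL (Fin n) ℚ)).Finite)
    (hint : Subgroup.closure {s, t} ⊓ Subgroup.closure {t, r}
      = (Subgroup.closure {t} : Subgroup (GL (Fin n) ℚ)))
    (hinf : {H : Submodule ℚ (Fin n → ℚ) |
      ∃ g ∈ Subgroup.closure {s, t, r}, IsReflection g ∧ fixedSpace g = H}.Infinite) :
    polyInvariantsElem s ⊔ polyInvariantsElem t ⊔ polyInvariantsElem r = ⊤ :=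
  sup_invariantsElem_eq_top_general s t r hs ht hr hinf
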